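/- arXiv:2410.02513 — 3 statements merged into one kernel-verified Lean document; each statement's English description precedes it below -/
import Mathlib

section
/- Under the same setup (Lagrangian L(p,λ) = ℓ(p) + Σ_g λ^g (ℓ_g(p) − c) with dual variables bounded by ‖λ‖₁ ≤ B), if (p̂, λ̂) is a ν-approximate equilibrium and some p ∈ P satisfies max_g ℓ_g(p) ≤ c, then for every group g, ℓ_g(p̂) ≤ c + (1 + 2ν)/B. -/
/-- Lemma (Equilibrium → approximate feasibility) for the Lagrangian game: with
`L(p, λ) = ℓ p + ∑ g, λ g * (ℓg g p − c)` and dual variables bounded by `‖λ‖₁ ≤ B`,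
if `(phat, lamhat)` is a `ν`-approximate equilibrium and some `p ∈ P` is feasible
(`max_g ℓg g p ≤ c`), then for every group `g`, `ℓg g phat ≤ c + (1 + 2ν)/B`. -/
theorem equilibrium_to_approx_feasibility
    {V : Type*} [NormedAddCommGroup V] [NormedSpace ℝ V]
    (G : ℕ) (hG : 0 < G)
    (P : Set V) (hPne : P.Nonempty) (hPconv : Convex ℝ P) (hPcomp : IsCompact P)
    (ℓ : V → ℝ) (ℓg : Fin G → V → ℝ)
    (hr : ∀ p ∈ P, ℓ p ∈ Set.Icc (0 : ℝ) 1)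
    (hrg : ∀ g, ∀ p ∈ P, ℓg g p ∈ Set.Icc (0 : ℝ) 1)
    (haff : ∀ p ∈ P, ∀ q ∈ P, ∀ θ : ℝ, 0 ≤ θ → θ ≤ 1 →
      ℓ (θ • p + (1 - θ) • q) = θ * ℓ p + (1 - θ) * ℓ q)
    (haffg : ∀ g, ∀ p ∈ P, ∀ q ∈ P, ∀ θ : ℝ, 0 ≤ θ → θ ≤ 1 →
      ℓg g (θ • p + (1 - θ) • q) = θ * ℓg g p + (1 - θ) * ℓg g q)
    (c : ℝ) (B : ℝ) (hB : 0 < B) (ν : ℝ)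
    (hfeas : ∃ p ∈ P, ∀ g, ℓg g p ≤ c)
    (phat : V) (hphat : phat ∈ P)
    (lamhat : Fin G → ℝ) (hlamhat0 : ∀ g, 0 ≤ lamhat g) (hlamhatB : ∑ g, lamhat g ≤ B)
    (heq1 : (ℓ phat + ∑ g, lamhat g * (ℓg g phat - c))
        - (⨅ p : P, (ℓ (p : V) + ∑ g, lamhat g * (ℓg g (p : V) - c))) ≤ ν)
    (heq2 : (⨆ lam : {l : Fin G → ℝ // (∀ g, 0 ≤ l g) ∧ ∑ g, l g ≤ B},
          (ℓ phat + ∑ g, (lam : Fin G → ℝ) g * (ℓg g phat - c)))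
        - (ℓ phat + ∑ g, lamhat g * (ℓg g phat - c)) ≤ ν) :
    ∀ g, ℓg g phat ≤ c + (1 + 2 * ν) / B := by

  obtain ⟨pst, hpst, hpstf⟩ := hfeas
  intro g0
  -- the infimum is bounded below
  have hbdd : BddBelow (Set.range fun p : P =>
      (ℓ (p : V) + ∑ g, lamhat g * (ℓg g (p : V) - c))) := by
    refine ⟨∑ g, lamhat g * (-c), ?_⟩
    rintro x ⟨p, rfl⟩
    have h0 : 0 ≤ ℓ (p : V) := (hr _ p.2).1
    have : ∑ g, lamhat g * (-c) ≤ ∑ g, lamhat g * (ℓg g (p : V) - c) := by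
      refine Finset.sum_le_sum fun g _ => ?_
      exact mul_le_mul_of_nonneg_left (by linarith [(hrg g _ p.2).1]) (hlamhat0 g)
    simp only
    linarith
  have hinf : (⨅ p : P, (ℓ (p : V) + ∑ g, lamhat g * (ℓg g (p : V) - c)))
      ≤ ℓ pst + ∑ g, lamhat g * (ℓg g pst - c) := ciInf_le hbdd ⟨pst, hpst⟩
  have hLpst : ℓ pst + ∑ g, lamhat g * (ℓg g pst - c) ≤ 1 := by
    have h1 : ℓ pst ≤ 1 := (hr _ hpst).2
    have h2 : ∑ g, lamhat g * (ℓg g pst - c) ≤ 0 := by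
      apply Finset.sum_nonpos fun g _ => ?_
      exact mul_nonpos_of_nonneg_of_nonpos (hlamhat0 g) (by linarith [hpstf g])
    linarith
  have hLhat : ℓ phat + ∑ g, lamhat g * (ℓg g phat - c) ≤ 1 + ν := by linarith
  -- the supremum is bounded above
  have hbdd2 : BddAbove (Set.range fun lam : {l : Fin G → ℝ // (∀ g, 0 ≤ l g) ∧ ∑ g, l g ≤ B} =>
      (ℓ phat + ∑ g, (lam : Fin G → ℝ) g * (ℓg g phat - c))) := by
    refine ⟨1 + B * |1 - c|, ?_⟩
    rintro x ⟨lam, rfl⟩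
    have h1 : ℓ phat ≤ 1 := (hr _ hphat).2
    have h2 : ∑ g, (lam : Fin G → ℝ) g * (ℓg g phat - c) ≤ ∑ g, (lam : Fin G → ℝ) g * |1 - c| := by
      refine Finset.sum_le_sum fun g _ => ?_
      refine mul_le_mul_of_nonneg_left ?_ (lam.2.1 g)
      have := (hrg g _ hphat).2
      have := le_abs_self (1 - c)
      linarith
    have h3 : ∑ g, (lam : Fin G → ℝ) g * |1 - c| = (∑ g, (lam : Fin G → ℝ) g) * |1 - c| := by
      rw [Finset.sum_mul]
    have h4 : (∑ g, (lam : Fin G → ℝ) g) * |1 - c| ≤ B * |1 - c| :=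
      mul_le_mul_of_nonneg_right lam.2.2 (abs_nonneg _)
    simp only
    linarith
  -- plug in the dual vector B·e_{g0}
  have hmem : (∀ g, 0 ≤ (fun g => if g = g0 then B else 0) g) ∧
      ∑ g, (fun g => if g = g0 then B else 0) g ≤ B := by
    constructor
    · intro g; by_cases h : g = g0 <;> simp [h, hB.le]
    · simp
  have hsup : ℓ phat + ∑ g, (if g = g0 then B else 0) * (ℓg g phat - c)
      ≤ (⨆ lam : {l : Fin G → ℝ // (∀ g, 0 ≤ l g) ∧ ∑ g, l g ≤ B},
          (ℓ phat + ∑ g, (lam : Fin G → ℝ) g * (ℓg g phat - c))) :=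
    le_ciSup hbdd2 ⟨fun g => if g = g0 then B else 0, hmem⟩
  have hcollapse : ∑ g, (if g = g0 then B else 0) * (ℓg g phat - c) = B * (ℓg g0 phat - c) := by
    rw [Finset.sum_eq_single g0]
    · simp
    · intro b _ hb; simp [hb]
    · intro h; exact absurd (Finset.mem_univ g0) h
  rw [hcollapse] at hsup
  have h0 : 0 ≤ ℓ phat := (hr _ hphat).1
  have hkey : B * (ℓg g0 phat - c) ≤ 1 + 2 * ν := by linarith
  have : ℓg g0 phat - c ≤ (1 + 2 * ν) / B := (le_div_iff₀ hB).mpr (by linarith)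
  linarith
end

section
/- Consider T rounds of play in a two-player zero-sum game with bilinear payoff U: Δ(A) × Λ → ℝ on convex sets, where strategies s_1^1,…,s_1^T ∈ Δ(A) and s_2^1,…,s_2^T ∈ Λ are played. If Σ_t U(s_1^t, s_2^t) − min_{s_1} Σ_t U(s_1, s_2^t) ≤ ν_1 T and max_{s_2} Σ_t U(s_1^t, s_2) − Σ_t U(s_1^t, s_2^t) ≤ ν_2 T, then the pair of averages (s̄_1, s̄_2) = ((1/T)Σ_t s_1^t, (1/T)Σ_t s_2^t) is a (ν_1+ν_2)-approximate equilibrium: U(s̄_1, s̄_2) − min_{s_1} U(s_1, s̄_2) ≤ ν_1+ν_2 and max_{s_2} U(s̄_1, s_2) − U(s̄_1, s̄_2) ≤ ν_1+ν_2. -/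
/-- Freund–Schapire no-regret dynamics (bilinear payoff): if the joint regrets of the two
players over `T` rounds are at most `ν₁ T` and `ν₂ T` respectively, then the pair of
average strategies is a `(ν₁ + ν₂)`-approximate equilibrium of the zero-sum game. -/
theorem no_regret_dynamics
    {V W : Type*} [AddCommGroup V] [Module ℝ V] [AddCommGroup W] [Module ℝ W]
    (A : Set V) (Λ : Set W) (hA : Convex ℝ A) (hΛ : Convex ℝ Λ)
    (U : V →ₗ[ℝ] W →ₗ[ℝ] ℝ)
    (T : ℕ) (hT : 0 < T) (ν₁ ν₂ : ℝ)
    (s₁ : Fin T → V) (hs₁ : ∀ t, s₁ t ∈ A)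
    (s₂ : Fin T → W) (hs₂ : ∀ t, s₂ t ∈ Λ)
    (hreg1 : ∀ s₁' ∈ A, (∑ t, U (s₁ t) (s₂ t)) ≤ (∑ t, U s₁' (s₂ t)) + ν₁ * T)
    (hreg2 : ∀ s₂' ∈ Λ, (∑ t, U (s₁ t) s₂') ≤ (∑ t, U (s₁ t) (s₂ t)) + ν₂ * T) :
    (∀ s₁' ∈ A,
        U ((T : ℝ)⁻¹ • ∑ t, s₁ t) ((T : ℝ)⁻¹ • ∑ t, s₂ t)
          ≤ U s₁' ((T : ℝ)⁻¹ • ∑ t, s₂ t) + (ν₁ + ν₂)) ∧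
    (∀ s₂' ∈ Λ,
        U ((T : ℝ)⁻¹ • ∑ t, s₁ t) s₂'
          ≤ U ((T : ℝ)⁻¹ • ∑ t, s₁ t) ((T : ℝ)⁻¹ • ∑ t, s₂ t) + (ν₁ + ν₂)) := by
  have hT' : (0:ℝ) < T := by exact_mod_cast hT
  have hTne : (T:ℝ) ≠ 0 := ne_of_gt hT'
  -- averages are in the convex sets
  have hmem1 : ((T : ℝ)⁻¹ • ∑ t, s₁ t) ∈ A := by
    have := hA.sum_mem (t := Finset.univ) (w := fun _ : Fin T => (T:ℝ)⁻¹)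
      (fun _ _ => by positivity)
      (by simp [Finset.sum_const, Finset.card_univ, mul_inv_cancel₀ hTne])
      (fun t _ => hs₁ t)
    simpa [Finset.smul_sum] using this
  have hmem2 : ((T : ℝ)⁻¹ • ∑ t, s₂ t) ∈ Λ := by
    have := hΛ.sum_mem (t := Finset.univ) (w := fun _ : Fin T => (T:ℝ)⁻¹)
      (fun _ _ => by positivity)
      (by simp [Finset.sum_const, Finset.card_univ, mul_inv_cancel₀ hTne])
      (fun t _ => hs₂ t)
    simpa [Finset.smul_sum] using this
  -- evaluate U at averages
  have hUL : ∀ y : W, U ((T : ℝ)⁻¹ • ∑ t, s₁ t) y = (T:ℝ)⁻¹ * ∑ t, U (s₁ t) y := by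
    intro y; simp [Finset.mul_sum]
  have hUR : ∀ x : V, U x ((T : ℝ)⁻¹ • ∑ t, s₂ t) = (T:ℝ)⁻¹ * ∑ t, U x (s₂ t) := by
    intro x; simp [Finset.mul_sum]
  set v : ℝ := (T:ℝ)⁻¹ * ∑ t, U (s₁ t) (s₂ t) with hv
  -- key bound 1: for s₂' ∈ Λ, U s̄₁ s₂' ≤ v + ν₂
  have key2 : ∀ s₂' ∈ Λ, U ((T : ℝ)⁻¹ • ∑ t, s₁ t) s₂' ≤ v + ν₂ := by
    intro s₂' hs₂'
    rw [hUL]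
    have h := hreg2 s₂' hs₂'
    have := mul_le_mul_of_nonneg_left h (le_of_lt (inv_pos.mpr hT'))
    calc (T:ℝ)⁻¹ * ∑ t, U (s₁ t) s₂'
        ≤ (T:ℝ)⁻¹ * ((∑ t, U (s₁ t) (s₂ t)) + ν₂ * T) := this
      _ = v + ν₂ := by rw [hv, mul_add, mul_comm ν₂, ← mul_assoc, inv_mul_cancel₀ hTne, one_mul]
  -- key bound 2: for s₁' ∈ A, v ≤ U s₁' s̄₂ + ν₁
  have key1 : ∀ s₁' ∈ A, v ≤ U s₁' ((T : ℝ)⁻¹ • ∑ t, s₂ t) + ν₁ := by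
    intro s₁' hs₁'
    rw [hUR]
    have h := hreg1 s₁' hs₁'
    have := mul_le_mul_of_nonneg_left h (le_of_lt (inv_pos.mpr hT'))
    calc v ≤ (T:ℝ)⁻¹ * ((∑ t, U s₁' (s₂ t)) + ν₁ * T) := this
      _ = (T:ℝ)⁻¹ * ∑ t, U s₁' (s₂ t) + ν₁ := by field_simp
  constructor
  · intro s₁' hs₁'
    have h1 := key2 _ hmem2
    have h2 := key1 s₁' hs₁'
    linarith
  · intro s₂' hs₂'
    have h1 := key2 s₂' hs₂'
    have h2 := key1 _ hmem1
    linarith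
end

section
/- Under Assumption (separability with simultaneous maximizers): for every agent (x,g) there exists z* in the feasible manipulation region {z : c_g(x,z) < 1} with b_{g'}(z*) = max_{z: c_g(x,z)<1} b_{g'}(z) for all g' simultaneously. Then for any threshold classifier f_t(x) = ∏_{g'} 𝟙[b_{g'}(x) ≥ t_{g'}], the post-best-response outcome of agent (x,g) satisfies f_t(BR(x,g,f_t)) = ∏_{g'} 𝟙[t_{g'}^{(x,g)} ≥ t_{g'}], where t_{g'}^{(x,g)} = max_{z: c_g(x,z)<1} b_{g'}(z). -/
/-- Under the simultaneous-maximizer assumption, the post-best-response outcome of agent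
`(x,g)` against the product-threshold classifier `f_t` (i.e., whether a feasible
manipulation `z` with `c g x z < 1` and `f_t z = 1` exists) equals the coordinate-wise
condition `∀ g', t g' ≤ max_{z : c g x z < 1} b g' z`. -/
theorem best_response_outcome_thresholds
    {X : Type*} (G : ℕ) (b : Fin G → X → ℝ) (c : Fin G → X → X → ℝ)
    (hc0 : ∀ g x, c g x x = 0)
    (hsim : ∀ g x, ∃ zstar, c g x zstar < 1 ∧
      ∀ g', IsGreatest (b g' '' {z | c g x z < 1}) (b g' zstar)) :
    ∀ (t : Fin G → ℝ) (x : X) (g : Fin G),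
      (∃ z, c g x z < 1 ∧ ∀ g', t g' ≤ b g' z)
        ↔ (∀ g', t g' ≤ sSup (b g' '' {z | c g x z < 1})) := by
  intro t x g
  obtain ⟨zstar, hz, hgr⟩ := hsim g x
  have hsup : ∀ g', sSup (b g' '' {z | c g x z < 1}) = b g' zstar :=
    fun g' => (hgr g').csSup_eq
  constructor
  · rintro ⟨z, hzc, hzt⟩ g'
    rw [hsup g']
    exact le_trans (hzt g') ((hgr g').2 ⟨z, hzc, rfl⟩)
  · intro h
    exact ⟨zstar, hz, fun g' => (hsup g' ▸ h g')⟩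
end
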